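/- arXiv:1503.00278 — 5 statements merged into one kernel-verified Lean document; each statement's English description precedes it below -/
import Mathlib

section
/- The temporality of the directed ring on n ≥ 3 nodes with respect to the all-paths property is exactly 2: there is a labeling assigning at most 2 labels per edge that gives a journey along every simple directed path of the ring, and every such labeling must assign at least 2 labels to some edge. -/
/-- `lab i` is the set of labels assigned to the edge `(u_i, u_{i+1 mod n})` of the
directed ring on `n` nodes (edges indexed by `0 ≤ i < n`).  The labeling preserves all
paths if along every simple directed path of the ring (starting at any node `a < n`, of
any length `1 ≤ m ≤ n-1`) one can select one label per consecutive edge forming a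
strictly increasing sequence, i.e. a journey. -/
def PreservesRingPaths (n : ℕ) (lab : ℕ → Finset ℕ) : Prop :=
  ∀ a m : ℕ, a < n → 1 ≤ m → m ≤ n - 1 →
    ∃ ts : ℕ → ℕ, (∀ j, j + 1 < m → ts j < ts (j + 1)) ∧
      ∀ j < m, ts j ∈ lab ((a + j) % n)

/-- The temporality of the directed ring on `n ≥ 3` nodes w.r.t. the all-paths property
is exactly 2: some labeling with at most 2 labels per edge preserves all simple paths,
and every labeling preserving all simple paths puts at least 2 labels on some edge. -/
theorem ring_temporality_eq_two (n : ℕ) (hn : 3 ≤ n) :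
    (∃ lab : ℕ → Finset ℕ, PreservesRingPaths n lab ∧ ∀ i < n, (lab i).card ≤ 2) ∧
    (∀ lab : ℕ → Finset ℕ, PreservesRingPaths n lab → ∃ i < n, 2 ≤ (lab i).card) := by
  constructor
  · refine ⟨fun i => {i, i + n}, ?_, ?_⟩
    · intro a m ha hm1 hm2
      refine ⟨fun j => a + j, fun j _ => by show a + j < a + (j + 1); omega, ?_⟩
      intro j hj
      show a + j ∈ ({(a + j) % n, (a + j) % n + n} : Finset ℕ)
      rcases lt_or_ge (a + j) n with h | h
      · rw [Nat.mod_eq_of_lt h]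
        simp
      · have hlt : a + j - n < n := by omega
        have : (a + j) % n = a + j - n := by
          rw [Nat.mod_eq_sub_mod h, Nat.mod_eq_of_lt hlt]
        rw [this, Finset.mem_insert, Finset.mem_singleton]
        omega
    · intro i _
      exact le_trans (Finset.card_insert_le _ _) (by simp)
  · intro lab h
    by_contra hc
    push_neg at hc
    have step : ∀ a < n, ∀ x ∈ lab a, ∀ y ∈ lab ((a + 1) % n), x < y := by
      intro a ha x hx y hy
      obtain ⟨ts, hmono, hmem⟩ := h a 2 ha (by omega) (by omega)
      have h0 : ts 0 ∈ lab a := by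
        simpa [Nat.mod_eq_of_lt ha] using hmem 0 (by omega)
      have h1 : ts 1 ∈ lab ((a + 1) % n) := hmem 1 (by omega)
      have hlt : ts 0 < ts 1 := hmono 0 (by omega)
      have e0 : x = ts 0 :=
        Finset.card_le_one.mp (by have := hc a ha; omega) x hx (ts 0) h0
      have e1 : y = ts 1 := by
        have hb : (a + 1) % n < n := Nat.mod_lt _ (by omega)
        exact Finset.card_le_one.mp (by have := hc _ hb; omega) y hy (ts 1) h1
      omega
    have npos : 0 < n := by omega
    have ne : ∀ k : ℕ, ∃ x, x ∈ lab (k % n) := by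
      intro k
      have hk : k % n < n := Nat.mod_lt _ npos
      obtain ⟨ts, _, hmem⟩ := h (k % n) 1 hk le_rfl (by omega)
      exact ⟨ts 0, by simpa [Nat.mod_mod_of_dvd, Nat.mod_eq_of_lt hk] using hmem 0 (by omega)⟩
    set g : ℕ → ℕ := fun k => Classical.choose (ne k) with hg
    have gmem : ∀ k, g k ∈ lab (k % n) := fun k => Classical.choose_spec (ne k)
    have gstep : ∀ k, g k < g (k + 1) := by
      intro k
      have hk : k % n < n := Nat.mod_lt _ npos
      have hmod : (k + 1) % n = (k % n + 1) % n := by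
        conv_lhs => rw [Nat.add_mod]
        rw [Nat.mod_eq_of_lt (show 1 < n by omega)]
      have hy : g (k + 1) ∈ lab ((k % n + 1) % n) := by
        rw [← hmod]; exact gmem (k + 1)
      exact step (k % n) hk (g k) (gmem k) (g (k + 1)) hy
    have chain : ∀ k, g 0 < g (k + 1) := by
      intro k
      induction k with
      | zero => exact gstep 0
      | succ m ih => exact lt_trans ih (gstep (m + 1))
    have hgn : g n = g 0 := by simp [hg, Nat.mod_self]
    have : g 0 < g n := by
      have := chain (n - 1)
      have hn' : n - 1 + 1 = n := by omega
      rwa [hn'] at this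
    omega
end

section
/- The labeling of the directed ring u_1,...,u_n assigning to edge (u_i,u_{i+1}) the label set {i, n+i} preserves every simple directed path of the ring, i.e., every simple path admits a strictly increasing selection of labels. -/
/-- The labeling assigning to the `i`-th edge (`1`-indexed: edge `(u_i, u_{i+1})`) the
label set `{i, n+i}` preserves every simple directed path of the directed ring on `n`
nodes.  With `0`-indexed edge `i` this is the label set `{i+1, n+i+1}`. -/
theorem ring_labeling_preserves_all_paths (n : ℕ) (hn : 1 ≤ n) :
    PreservesRingPaths n (fun i => ({i + 1, n + i + 1} : Finset ℕ)) := by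
  intro a m ha hm hmn
  refine ⟨fun j => a + j + 1, fun j _ => by show a + j + 1 < a + (j + 1) + 1; omega, fun j hj => ?_⟩
  simp only [Finset.mem_insert, Finset.mem_singleton]
  rcases lt_or_ge (a + j) n with h | h
  · left; rw [Nat.mod_eq_of_lt h]
  · right
    have : (a + j) % n = a + j - n := by
      rw [Nat.mod_eq_sub_mod h, Nat.mod_eq_of_lt (by omega)]
    omega
end

section
/- The complete digraph on n nodes contains an edge-kernel of size ⌊n/2⌋; consequently, its temporality with respect to preserving all paths is at least ⌊n/2⌋. -/
/-- The list of vertices `p` traverses the edges `es` (in this order). -/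
def TraversesInOrder {V : Type*} (p : List V) (es : List (V × V)) : Prop :=
  ∃ pos : ℕ → ℕ, (∀ a, a + 1 < es.length → pos a < pos (a + 1)) ∧
    ∀ a < es.length, ∃ u v : V, es[a]? = some (u, v) ∧
      p[pos a]? = some u ∧ p[pos a + 1]? = some v

/-- `E : Fin k → V × V` is an edge-kernel of the digraph `G`. -/
def EdgeKernel {V : Type*} (G : V → V → Prop) {k : ℕ} (E : Fin k → V × V) : Prop :=
  Function.Injective E ∧ (∀ i, G (E i).1 (E i).2) ∧
    ∀ π : Equiv.Perm (Fin k), ∃ p : List V, p.Nodup ∧ p.Chain' G ∧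
      TraversesInOrder p (List.ofFn fun i => E (π i))

/-- The labeling `lab` preserves all paths of `G`. -/
def PreservesAllPaths {V : Type*} (G : V → V → Prop) (lab : V → V → Finset ℕ) : Prop :=
  ∀ p : List V, p.Nodup → p.Chain' G →
    ∃ ts : ℕ → ℕ, (∀ a, a + 2 < p.length → ts a < ts (a + 1)) ∧
      ∀ a, a + 1 < p.length → ∃ u v : V, p[a]? = some u ∧ p[a + 1]? = some v ∧
        ts a ∈ lab u v

/-- The canonical matching: edge `i` goes from vertex `2i` to vertex `2i+1`. -/
def kedge (n k : ℕ) (hk : 2 * k ≤ n) (i : Fin k) : Fin n × Fin n :=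
  (⟨2 * i.val, by have := i.isLt; omega⟩, ⟨2 * i.val + 1, by have := i.isLt; omega⟩)

/-- The canonical matching is an edge-kernel of the complete digraph. -/
lemma kedge_kernel (n k : ℕ) (hk : 2 * k ≤ n) :
    EdgeKernel (fun u v : Fin n => u ≠ v) (kedge n k hk) := by
  refine ⟨?_, ?_, ?_⟩
  · intro i j h
    have h1 : (2 * i.val : ℕ) = 2 * j.val := congrArg (fun x => (x.1 : Fin n).val) h
    exact Fin.ext (by omega)
  · intro i
    simp only [kedge, ne_eq, Fin.mk.injEq]
    omega
  · intro π
    refine ⟨List.ofFn (fun j : Fin (2 * k) =>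
      (⟨2 * (π ⟨j.val / 2, by have := j.isLt; omega⟩).val + j.val % 2,
        by have := (π ⟨j.val / 2, by have := j.isLt; omega⟩).isLt; omega⟩ : Fin n)), ?_, ?_, ?_⟩
    · rw [List.nodup_ofFn]
      intro j1 j2 h
      have hb1 : j1.val / 2 < k := by have := j1.isLt; omega
      have hb2 : j2.val / 2 < k := by have := j2.isLt; omega
      have h' : 2 * (π ⟨j1.val / 2, hb1⟩).val + j1.val % 2
          = 2 * (π ⟨j2.val / 2, hb2⟩).val + j2.val % 2 := congrArg Fin.val h
      have hval : π ⟨j1.val / 2, hb1⟩ = π ⟨j2.val / 2, hb2⟩ := Fin.ext (by omega)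
      have hdiv : j1.val / 2 = j2.val / 2 := congrArg Fin.val (π.injective hval)
      exact Fin.ext (by omega)
    · rw [List.Chain', List.isChain_iff_getElem]
      intro a ha
      simp only [List.length_ofFn] at ha
      simp only [List.getElem_ofFn]
      intro hcon
      have := congrArg Fin.val hcon
      simp only [Fin.coe_cast] at this
      omega
    · refine ⟨fun a => 2 * a, fun a _ => by show 2*a < 2*(a+1); omega, ?_⟩
      intro a ha
      simp only [List.length_ofFn] at ha
      refine ⟨(kedge n k hk (π ⟨a, ha⟩)).1, (kedge n k hk (π ⟨a, ha⟩)).2, ?_, ?_, ?_⟩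
      · rw [List.getElem?_eq_getElem (by simpa using ha)]
        simp
      · show _ = some _
        rw [List.getElem?_eq_getElem (by simp; omega)]
        rw [List.getElem_ofFn]
        have h1 : 2 * a / 2 = a := by omega
        have h2 : 2 * a % 2 = 0 := by omega
        simp [kedge, h1, h2]
      · show _ = some _
        rw [List.getElem?_eq_getElem (by simp; omega)]
        rw [List.getElem_ofFn]
        have h1 : (2 * a + 1) / 2 = a := by omega
        have h2 : (2 * a + 1) % 2 = 1 := by omega
        simp [kedge, h1, h2]

/-- If a family of `k + 1` finite sets of naturals admits, for every ordering,
a strictly increasing transversal, then some set has at least `k + 1` elements. -/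
lemma key : ∀ (k : ℕ) (S : Fin (k + 1) → Finset ℕ),
    (∀ π : Equiv.Perm (Fin (k + 1)), ∃ t : Fin (k + 1) → ℕ,
        StrictMono t ∧ ∀ j, t j ∈ S (π j)) →
    ∃ i, k + 1 ≤ (S i).card := by
  intro k
  induction k with
  | zero =>
    intro S h
    obtain ⟨t, _, ht⟩ := h (Equiv.refl _)
    exact ⟨0, Finset.card_pos.mpr ⟨t 0, by simpa using ht 0⟩⟩
  | succ k ih =>
    intro S h
    have hne : ∀ i, (S i).Nonempty := by
      obtain ⟨t, _, ht⟩ := h (Equiv.refl _)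
      exact fun i => ⟨t i, by simpa using ht i⟩
    obtain ⟨i₀, -, hi₀⟩ := Finset.exists_min_image Finset.univ
      (fun i => (S i).max' (hne i)) ⟨0, Finset.mem_univ 0⟩
    set M := (S i₀).max' (hne i₀) with hM
    set S' : Fin (k + 1) → Finset ℕ := fun j =>
      (S (i₀.succAbove j)).filter (· < M) with hS'
    have h' : ∀ π' : Equiv.Perm (Fin (k + 1)), ∃ t' : Fin (k + 1) → ℕ,
        StrictMono t' ∧ ∀ j, t' j ∈ S' (π' j) := by
      intro π'
      set π : Equiv.Perm (Fin (k + 2)) :=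
        (finSuccEquiv' (Fin.last (k + 1))).trans
          ((Equiv.optionCongr π').trans (finSuccEquiv' i₀).symm) with hπ
      obtain ⟨t, htm, ht⟩ := h π
      have hlast : π (Fin.last (k + 1)) = i₀ := by
        simp [hπ, finSuccEquiv'_at]
      have hcast : ∀ j : Fin (k + 1), π j.castSucc = i₀.succAbove (π' j) := by
        intro j
        have : (finSuccEquiv' (Fin.last (k + 1))) j.castSucc = some j := by
          rw [← Fin.succAbove_last, finSuccEquiv'_succAbove]
        simp [hπ, this, finSuccEquiv'_symm_some]
      have hMle : t (Fin.last (k + 1)) ≤ M := by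
        have := ht (Fin.last (k + 1))
        rw [hlast] at this
        exact Finset.le_max' _ _ this
      refine ⟨fun j => t j.castSucc, ?_, ?_⟩
      · intro a b hab
        exact htm (Fin.castSucc_lt_castSucc_iff.mpr hab)
      · intro j
        have h1 := ht j.castSucc
        rw [hcast] at h1
        have h2 : t j.castSucc < M :=
          lt_of_lt_of_le (htm (Fin.castSucc_lt_last j)) hMle
        simp only [hS', Finset.mem_filter]
        exact ⟨h1, h2⟩
    obtain ⟨j, hj⟩ := ih S' h'
    refine ⟨i₀.succAbove j, ?_⟩
    have hsub : S' j ⊂ S (i₀.succAbove j) := by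
      rw [Finset.ssubset_iff_of_subset (Finset.filter_subset _ _)]
      refine ⟨(S (i₀.succAbove j)).max' (hne _), Finset.max'_mem _ _, ?_⟩
      intro hcon
      have h3 : (S (i₀.succAbove j)).max' (hne _) < M := (Finset.mem_filter.mp hcon).2
      have h4 := hi₀ (i₀.succAbove j) (Finset.mem_univ _)
      omega
    have := Finset.card_lt_card hsub
    omega

lemma chain_lt {f : ℕ → ℕ} {L : ℕ} (h : ∀ a, a + 1 < L → f a < f (a + 1)) :
    ∀ b a, a < b → b < L → f a < f b := by
  intro b
  induction b with
  | zero => omega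
  | succ b ih =>
    intro a hab hbL
    rcases eq_or_lt_of_le (Nat.lt_succ_iff.mp hab) with rfl | h2
    · exact h a hbL
    · exact (ih a h2 (by omega)).trans (h b hbL)

/-- A path-preserving labeling provides, for each ordering of the kernel edges,
a strictly increasing transversal of the corresponding label sets. -/
lemma transversal (n k : ℕ) (hk : 2 * k ≤ n) (lab : Fin n → Fin n → Finset ℕ)
    (hlab : PreservesAllPaths (fun u v : Fin n => u ≠ v) lab)
    (π : Equiv.Perm (Fin k)) :
    ∃ t : Fin k → ℕ, StrictMono t ∧
      ∀ j, t j ∈ lab (kedge n k hk (π j)).1 (kedge n k hk (π j)).2 := by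
  obtain ⟨-, -, hker⟩ := kedge_kernel n k hk
  obtain ⟨p, hnd, hch, pos, hpos, htrav⟩ := hker π
  obtain ⟨ts, hts1, hts2⟩ := hlab p hnd hch
  have hlen : (List.ofFn fun i => kedge n k hk (π i)).length = k := by simp
  rw [hlen] at hpos htrav
  have hplen : ∀ a, a < k → pos a + 1 < p.length := by
    intro a ha
    obtain ⟨u, v, -, -, hv⟩ := htrav a ha
    exact (List.getElem?_eq_some_iff.mp hv).1
  have hposlt : ∀ a b, a < b → b < k → pos a < pos b := fun a b h1 h2 =>
    chain_lt hpos b a h1 h2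
  have htslt : ∀ a b, a < b → b + 1 < p.length → ts a < ts b := by
    intro a b hab hbl
    exact chain_lt (L := p.length - 1) (f := ts)
      (fun c hc => hts1 c (by omega)) b a hab (by omega)
  refine ⟨fun j => ts (pos j.val), ?_, ?_⟩
  · intro a b hab
    exact htslt _ _ (hposlt a.val b.val (Fin.lt_def.mp hab) b.isLt) (hplen b.val b.isLt)
  · intro j
    obtain ⟨u, v, he, hu, hv⟩ := htrav j.val j.isLt
    have he' : (List.ofFn fun i => kedge n k hk (π i))[j.val]? =
        some (kedge n k hk (π j)) := by
      rw [List.getElem?_eq_getElem (by simp only [List.length_ofFn]; exact j.isLt),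
        List.getElem_ofFn]
    rw [he'] at he
    obtain ⟨hqq, hqq2⟩ := Prod.ext_iff.mp (Option.some.inj he)
    obtain ⟨u', v', hu', hv', hmem⟩ := hts2 (pos j.val) (hplen j.val j.isLt)
    have huu : u = u' := Option.some.inj (hu.symm.trans hu')
    have hvv : v = v' := Option.some.inj (hv.symm.trans hv')
    show ts (pos j.val) ∈ _
    rw [hqq, hqq2]
    rw [← huu, ← hvv] at hmem
    exact hmem

/-- The complete digraph on `n` nodes (edge relation `u ≠ v`) contains an edge-kernel of
size `⌊n/2⌋`; consequently every labeling preserving all of its paths must put at least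
`⌊n/2⌋` labels on some edge, i.e. its temporality w.r.t. all paths is at least `⌊n/2⌋`. -/
theorem complete_digraph_edge_kernel (n : ℕ) (hn : 2 ≤ n) :
    (∃ E : Fin (n / 2) → Fin n × Fin n,
        EdgeKernel (fun u v : Fin n => u ≠ v) E) ∧
    (∀ lab : Fin n → Fin n → Finset ℕ,
        PreservesAllPaths (fun u v : Fin n => u ≠ v) lab →
        ∃ u v : Fin n, u ≠ v ∧ n / 2 ≤ (lab u v).card) := by
  have hk : 2 * (n / 2) ≤ n := by omega
  constructor
  · exact ⟨kedge n (n / 2) hk, kedge_kernel n (n / 2) hk⟩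
  · intro lab hlab
    obtain ⟨k0, hk0⟩ : ∃ k0, n / 2 = k0 + 1 := ⟨n / 2 - 1, by omega⟩
    have hk2 : 2 * (k0 + 1) ≤ n := by omega
    obtain ⟨i, hi⟩ := key k0
      (fun i => lab (kedge n (k0 + 1) hk2 i).1 (kedge n (k0 + 1) hk2 i).2)
      (fun π => by
        obtain ⟨t, h1, h2⟩ := transversal n (k0 + 1) hk2 lab hlab π
        exact ⟨t, h1, h2⟩)
    refine ⟨(kedge n (k0 + 1) hk2 i).1, (kedge n (k0 + 1) hk2 i).2, ?_, ?_⟩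
    · simp only [kedge, ne_eq, Fin.mk.injEq]
      omega
    · omega
end

section
/- For every strongly connected digraph G, there is a labeling using at most 2 labels per edge such that for every ordered pair (u,v) of nodes there is a journey from u to v. Consequently, the temporality of any digraph with respect to preserving reachabilities is at most 2. -/
def HasJourney {V : Type*} (G : V → V → Prop) (lab : V → V → Finset ℕ) (u v : V) : Prop :=
  ∃ p : List V, p.head? = some u ∧ p.getLast? = some v ∧ p.Nodup ∧ p.Chain' G ∧
    ∃ ts : ℕ → ℕ, (∀ a, a + 2 < p.length → ts a < ts (a + 1)) ∧
      ∀ a, a + 1 < p.length → ∃ x y : V, p[a]? = some x ∧ p[a + 1]? = some y ∧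
        ts a ∈ lab x y

namespace RTTwo

set_option linter.unusedSectionVars false
attribute [local instance] Classical.propDecidable

variable {V : Type*} [Fintype V] (G : V → V → Prop)

/-- there is a path of length `k` from `u` to `v`. -/
def PathLen (k : ℕ) (u v : V) : Prop :=
  ∃ f : ℕ → V, f 0 = u ∧ f k = v ∧ ∀ i < k, G (f i) (f (i + 1))

lemma pathLen_zero {u v : V} : PathLen G 0 u v ↔ u = v := by
  constructor
  · rintro ⟨f, rfl, rfl, -⟩; rfl
  · rintro rfl; exact ⟨fun _ => u, rfl, rfl, by omega⟩

lemma pathLen_succ {k : ℕ} {u v : V} :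
    PathLen G (k + 1) u v ↔ ∃ w, G u w ∧ PathLen G k w v := by
  constructor
  · rintro ⟨f, rfl, rfl, hf⟩
    exact ⟨f 1, hf 0 (by omega), fun i => f (i + 1), rfl, rfl,
      fun i hi => hf (i + 1) (by omega)⟩
  · rintro ⟨w, hw, f, rfl, rfl, hf⟩
    refine ⟨fun i => if i = 0 then u else f (i - 1), by simp, by simp, ?_⟩
    intro i hi
    rcases Nat.eq_zero_or_pos i with rfl | hpos
    · simpa using hw
    · have h1 : ¬ i = 0 := by omega
      have h2 : ¬ i + 1 = 0 := by omega
      simp only [h1, h2, if_false]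
      have := hf (i - 1) (by omega)
      rw [show i - 1 + 1 = i by omega] at this
      rwa [show i + 1 - 1 = i by omega]

lemma pathLen_snoc {k : ℕ} {u v w : V} (h : PathLen G k u v) (e : G v w) :
    PathLen G (k + 1) u w := by
  obtain ⟨f, rfl, rfl, hf⟩ := h
  refine ⟨fun i => if i ≤ k then f i else w, by simp, by simp, ?_⟩
  intro i hi
  rcases Nat.lt_or_ge i k with hik | hik
  · have h1 : i ≤ k := by omega
    have h2 : i + 1 ≤ k := by omega
    simp only [h1, h2, if_true]
    exact hf i hik
  · have h1 : i = k := by omega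
    subst h1
    simp only [le_refl, if_true, show ¬ i + 1 ≤ i by omega, if_false]
    exact e

lemma pathLen_init {k : ℕ} {u v : V} (h : PathLen G (k + 1) u v) :
    ∃ w, PathLen G k u w ∧ G w v := by
  obtain ⟨f, rfl, rfl, hf⟩ := h
  exact ⟨f k, ⟨f, rfl, rfl, fun i hi => hf i (by omega)⟩, hf k (by omega)⟩

lemma reach_iff_pathLen {u v : V} :
    Relation.ReflTransGen G u v ↔ ∃ k, PathLen G k u v := by
  constructor
  · intro h
    induction h with
    | refl => exact ⟨0, (pathLen_zero G).2 rfl⟩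
    | tail _ e ih =>
      obtain ⟨k, hk⟩ := ih
      exact ⟨k + 1, pathLen_snoc G hk e⟩
  · rintro ⟨k, hk⟩
    induction k generalizing u with
    | zero => rw [(pathLen_zero G).1 hk]
    | succ k ih =>
      obtain ⟨w, hw, hp⟩ := (pathLen_succ G).1 hk
      exact (Relation.ReflTransGen.single hw).trans (ih hp)

/-- shortest path lengths are `< card V`. -/
lemma find_pathLen_lt_card {u v : V} (h : ∃ k, PathLen G k u v) :
    Nat.find h < Fintype.card V := by
  by_contra hge
  push_neg at hge
  obtain ⟨f, hf0, hfk, hf⟩ := Nat.find_spec h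
  set k := Nat.find h with hk
  have hcard : Fintype.card V < Fintype.card (Fin (k + 1)) := by
    simp only [Fintype.card_fin]; omega
  obtain ⟨a', b', hab', hfab'⟩ := Fintype.exists_ne_map_eq_of_card_lt
    (fun i : Fin (k + 1) => f i) hcard
  obtain ⟨a, b, hlt, hb, hfab⟩ : ∃ a b : ℕ, a < b ∧ b ≤ k ∧ f a = f b := by
    rcases Nat.lt_or_ge (a' : ℕ) (b' : ℕ) with hlt | hge2
    · exact ⟨a', b', hlt, by omega, hfab'⟩
    · refine ⟨b', a', by
        have := a'.2; have := b'.2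
        have : (a' : ℕ) ≠ (b' : ℕ) := fun hc => hab' (Fin.ext hc)
        omega, by omega, hfab'.symm⟩
  have hnew : PathLen G (k - (b - a)) u v := by
    refine ⟨fun m => if m < a then f m else f (m + (b - a)), ?_, ?_, ?_⟩
    · rcases Nat.eq_zero_or_pos a with ha0 | hpos
      · subst ha0
        simp only [show ∀ m : ℕ, ¬ m < 0 from fun m => by omega, if_false, Nat.zero_add,
          Nat.sub_zero]
        rw [← hfab]; exact hf0
      · simp only [hpos, if_true]; exact hf0
    · have h1 : ¬ (k - (b - a)) < a := by omega
      simp only [h1, if_false]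
      rw [show k - (b - a) + (b - a) = k by omega]; exact hfk
    · intro i hi
      rcases Nat.lt_or_ge (i + 1) a with h1 | h1
      · have h2 : i < a := by omega
        simp only [h1, h2, if_true]
        exact hf i (by omega)
      · rcases Nat.lt_or_ge i a with h2 | h2
        · -- i + 1 = a
          have h3 : i + 1 = a := by omega
          simp only [h2, if_true, show ¬ i + 1 < a by omega, if_false]
          rw [show i + 1 + (b - a) = b by omega, ← hfab, ← h3]
          exact hf i (by omega)
        · simp only [show ¬ i < a by omega, show ¬ i + 1 < a by omega, if_false]
          rw [show i + 1 + (b - a) = i + (b - a) + 1 by omega]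
          exact hf (i + (b - a)) (by omega)
  exact Nat.find_min h (by omega) hnew


/-- mutual reachability -/
def rel (u v : V) : Prop :=
  Relation.ReflTransGen G u v ∧ Relation.ReflTransGen G v u

lemma rel_refl (u : V) : rel G u u := ⟨.refl, .refl⟩
lemma rel_symm {u v : V} (h : rel G u v) : rel G v u := ⟨h.2, h.1⟩
lemma rel_trans {u v w : V} (h : rel G u v) (h' : rel G v w) : rel G u w :=
  ⟨h.1.trans h'.1, h'.2.trans h.2⟩

def st : Setoid V :=
  ⟨rel G, ⟨rel_refl G, rel_symm G, rel_trans G⟩⟩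

/-- representative of the strongly connected component -/
noncomputable def rp (u : V) : V := (Quotient.mk (st G) u).out

lemma rp_rel (u : V) : rel G (rp G u) u := @Quotient.mk_out V (st G) u

lemma rel_rp (u : V) : rel G u (rp G u) := rel_symm G (rp_rel G u)

lemma rp_eq_of_rel {u v : V} (h : rel G u v) : rp G u = rp G v :=
  congrArg Quotient.out (Quotient.sound h)

lemma rel_of_rp_eq {u v : V} (h : rp G u = rp G v) : rel G u v :=
  rel_trans G (rel_rp G u) (h ▸ rp_rel G v)

/-- the level: number of vertices that can reach `u` -/
noncomputable def lvl (u : V) : ℕ :=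
  (Finset.univ.filter (fun x => Relation.ReflTransGen G x u)).card

lemma lvl_le_card (u : V) : lvl G u ≤ Fintype.card V :=
  le_trans (Finset.card_le_card (Finset.filter_subset _ _)) (by simp)

lemma lvl_mono {u v : V} (h : Relation.ReflTransGen G u v) : lvl G u ≤ lvl G v := by
  refine Finset.card_le_card ?_
  intro x hx
  simp only [Finset.mem_filter, Finset.mem_univ, true_and] at *
  exact hx.trans h

lemma lvl_eq_of_rel {u v : V} (h : rel G u v) : lvl G u = lvl G v :=
  le_antisymm (lvl_mono G h.1) (lvl_mono G h.2)

lemma lvl_lt {u v : V} (e : G u v) (h : ¬ rel G u v) : lvl G u < lvl G v := by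
  refine Finset.card_lt_card ?_
  rw [Finset.ssubset_iff_of_subset]
  · refine ⟨v, by simp [Relation.ReflTransGen.refl], ?_⟩
    simp only [Finset.mem_filter, Finset.mem_univ, true_and]
    intro hvu
    exact h ⟨Relation.ReflTransGen.single e, hvu⟩
  · intro x hx
    simp only [Finset.mem_filter, Finset.mem_univ, true_and] at *
    exact hx.trans (Relation.ReflTransGen.single e)

lemma exists_pathLen_to_rp (u : V) : ∃ k, PathLen G k u (rp G u) :=
  (reach_iff_pathLen G).1 (rel_rp G u).1

lemma exists_pathLen_from_rp (u : V) : ∃ k, PathLen G k (rp G u) u :=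
  (reach_iff_pathLen G).1 (rp_rel G u).1

/-- distance from `u` to its representative -/
noncomputable def din (u : V) : ℕ := Nat.find (exists_pathLen_to_rp G u)

/-- distance from the representative to `u` -/
noncomputable def dout (u : V) : ℕ := Nat.find (exists_pathLen_from_rp G u)

lemma din_lt_card (u : V) : din G u < Fintype.card V :=
  find_pathLen_lt_card G _

lemma dout_lt_card (u : V) : dout G u < Fintype.card V :=
  find_pathLen_lt_card G _

lemma din_eq_zero {u : V} : din G u = 0 ↔ u = rp G u := by
  rw [din, Nat.find_eq_zero, pathLen_zero]

lemma dout_eq_zero {u : V} : dout G u = 0 ↔ rp G u = u := by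
  rw [dout, Nat.find_eq_zero, pathLen_zero]

lemma pa_exists {u : V} (h : din G u ≠ 0) :
    ∃ w, G u w ∧ rel G w u ∧ din G w = din G u - 1 := by
  have hspec := Nat.find_spec (exists_pathLen_to_rp G u)
  rw [show Nat.find (exists_pathLen_to_rp G u) = din G u from rfl] at hspec
  obtain ⟨k, hk⟩ : ∃ k, din G u = k + 1 := ⟨din G u - 1, by omega⟩
  rw [hk] at hspec
  obtain ⟨w, hw, hwp⟩ := (pathLen_succ G).1 hspec
  have hreach_w_rp : Relation.ReflTransGen G w (rp G u) := (reach_iff_pathLen G).2 ⟨k, hwp⟩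
  have hrel : rel G w u :=
    ⟨hreach_w_rp.trans (rp_rel G u).1, Relation.ReflTransGen.single hw⟩
  have hrp : rp G w = rp G u := rp_eq_of_rel G hrel
  refine ⟨w, hw, hrel, ?_⟩
  have hle : din G w ≤ k := Nat.find_min' (exists_pathLen_to_rp G w) (by rw [hrp]; exact hwp)
  have hge : k ≤ din G w := by
    by_contra hc
    push_neg at hc
    have hspec' := Nat.find_spec (exists_pathLen_to_rp G w)
    rw [show Nat.find (exists_pathLen_to_rp G w) = din G w from rfl, hrp] at hspec'
    have h2 : PathLen G (din G w + 1) u (rp G u) := (pathLen_succ G).2 ⟨w, hw, hspec'⟩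
    have h3 : din G u ≤ din G w + 1 := Nat.find_min' (exists_pathLen_to_rp G u) h2
    omega
  omega

lemma qa_exists {u : V} (h : dout G u ≠ 0) :
    ∃ w, G w u ∧ rel G w u ∧ dout G w = dout G u - 1 := by
  have hspec := Nat.find_spec (exists_pathLen_from_rp G u)
  rw [show Nat.find (exists_pathLen_from_rp G u) = dout G u from rfl] at hspec
  obtain ⟨k, hk⟩ : ∃ k, dout G u = k + 1 := ⟨dout G u - 1, by omega⟩
  rw [hk] at hspec
  obtain ⟨w, hwp, hw⟩ := pathLen_init G hspec
  have hreach_rp_w : Relation.ReflTransGen G (rp G u) w := (reach_iff_pathLen G).2 ⟨k, hwp⟩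
  have hrel : rel G w u :=
    ⟨Relation.ReflTransGen.single hw, (rel_rp G u).1.trans hreach_rp_w⟩
  have hrp : rp G w = rp G u := rp_eq_of_rel G hrel
  refine ⟨w, hw, hrel, ?_⟩
  have hle : dout G w ≤ k := Nat.find_min' (exists_pathLen_from_rp G w) (by rw [hrp]; exact hwp)
  have hge : k ≤ dout G w := by
    by_contra hc
    push_neg at hc
    have hspec' := Nat.find_spec (exists_pathLen_from_rp G w)
    rw [show Nat.find (exists_pathLen_from_rp G w) = dout G w from rfl, hrp] at hspec'
    have h2 : PathLen G (dout G w + 1) (rp G u) u := pathLen_snoc G hspec' hw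
    have h3 : dout G u ≤ dout G w + 1 := Nat.find_min' (exists_pathLen_from_rp G u) h2
    omega
  omega

/-- in-tree parent -/
noncomputable def pa (u : V) : V :=
  if h : din G u = 0 then u else (pa_exists G h).choose

/-- out-tree parent (predecessor) -/
noncomputable def qa (u : V) : V :=
  if h : dout G u = 0 then u else (qa_exists G h).choose

lemma pa_spec {u : V} (h : din G u ≠ 0) :
    G u (pa G u) ∧ rel G (pa G u) u ∧ din G (pa G u) = din G u - 1 := by
  rw [pa, dif_neg h]
  exact (pa_exists G h).choose_spec

lemma qa_spec {u : V} (h : dout G u ≠ 0) :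
    G (qa G u) u ∧ rel G (qa G u) u ∧ dout G (qa G u) = dout G u - 1 := by
  rw [qa, dif_neg h]
  exact (qa_exists G h).choose_spec

lemma pa_iter {u : V} : ∀ j, j ≤ din G u →
    din G ((pa G)^[j] u) = din G u - j ∧ rel G ((pa G)^[j] u) u := by
  intro j
  induction j with
  | zero => intro _; simpa using rel_refl G u
  | succ j ih =>
    intro hj
    obtain ⟨hdin, hrel⟩ := ih (by omega)
    rw [Function.iterate_succ_apply']
    have hne : din G ((pa G)^[j] u) ≠ 0 := by omega
    obtain ⟨-, hrel', hdin'⟩ := pa_spec G hne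
    exact ⟨by omega, rel_trans G hrel' hrel⟩

lemma qa_iter {u : V} : ∀ j, j ≤ dout G u →
    dout G ((qa G)^[j] u) = dout G u - j ∧ rel G ((qa G)^[j] u) u := by
  intro j
  induction j with
  | zero => intro _; simpa using rel_refl G u
  | succ j ih =>
    intro hj
    obtain ⟨hdout, hrel⟩ := ih (by omega)
    rw [Function.iterate_succ_apply']
    have hne : dout G ((qa G)^[j] u) ≠ 0 := by omega
    obtain ⟨-, hrel', hdout'⟩ := qa_spec G hne
    exact ⟨by omega, rel_trans G hrel' hrel⟩

lemma pa_iter_din (u : V) : (pa G)^[din G u] u = rp G u := by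
  obtain ⟨hdin, hrel⟩ := pa_iter G (din G u) le_rfl
  have h0 : din G ((pa G)^[din G u] u) = 0 := by omega
  rw [(din_eq_zero G).1 h0]
  exact (rp_eq_of_rel G hrel)

lemma qa_iter_dout (u : V) : (qa G)^[dout G u] u = rp G u := by
  obtain ⟨hdout, hrel⟩ := qa_iter G (dout G u) le_rfl
  have h0 : dout G ((qa G)^[dout G u] u) = 0 := by omega
  rw [← (dout_eq_zero G).1 h0]
  exact (rp_eq_of_rel G hrel)


/-- `N`, a number bigger than every tree distance -/
noncomputable def nn : ℕ := Fintype.card V + 1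

/-- the labeling -/
noncomputable def lab : V → V → Finset ℕ := fun x y =>
  (if din G x ≠ 0 ∧ y = pa G x then {2 * nn (V := V) * lvl G x + nn (V := V) - din G x} else ∅)
  ∪ (if dout G y ≠ 0 ∧ x = qa G y then {2 * nn (V := V) * lvl G y + nn (V := V) + dout G y} else ∅)
  ∪ (if G x y ∧ ¬ rel G x y then {2 * nn (V := V) * lvl G x + 2 * nn (V := V) - 1} else ∅)

lemma lab_card (x y : V) : (lab G x y).card ≤ 2 := by
  rw [lab]
  by_cases hc : G x y ∧ ¬ rel G x y
  · rw [if_pos hc]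
    have h1 : ¬ (din G x ≠ 0 ∧ y = pa G x) := by
      rintro ⟨hne, rfl⟩
      exact hc.2 (rel_symm G (pa_spec G hne).2.1)
    have h2 : ¬ (dout G y ≠ 0 ∧ x = qa G y) := by
      rintro ⟨hne, rfl⟩
      exact hc.2 (qa_spec G hne).2.1
    rw [if_neg h1, if_neg h2]
    simp
  · rw [if_neg hc]
    refine le_trans (Finset.card_union_le _ _) ?_
    have b1 : (if din G x ≠ 0 ∧ y = pa G x then
        ({2 * nn (V := V) * lvl G x + nn (V := V) - din G x} : Finset ℕ) else ∅).card ≤ 1 := by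
      split <;> simp
    have b2 : (if dout G y ≠ 0 ∧ x = qa G y then
        ({2 * nn (V := V) * lvl G y + nn (V := V) + dout G y} : Finset ℕ) else ∅).card ≤ 1 := by
      split <;> simp
    have b3 : ((∅ : Finset ℕ)).card = 0 := rfl
    refine le_trans (add_le_add (Finset.card_union_le _ _) le_rfl) ?_
    simp only [Finset.card_empty, add_zero]
    omega

/-- a journey with its chosen labels, built up from the front -/
inductive Gd (lb : V → V → Finset ℕ) : List V → List ℕ → Prop
  | single (x : V) : Gd lb [x] []
  | cons {p : List V} {ℓ : List ℕ} (x y : V) (t : ℕ) :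
      Gd lb p ℓ → p.head? = some y → t ∈ lb x y → G x y → x ∉ p →
      (∀ t' ∈ ℓ.head?, t < t') → Gd lb (x :: p) (t :: ℓ)

variable {lb : V → V → Finset ℕ}

lemma Gd.ne_nil {p : List V} {ℓ : List ℕ} (h : Gd G lb p ℓ) : p ≠ [] := by
  cases h <;> simp

lemma Gd.length {p : List V} {ℓ : List ℕ} (h : Gd G lb p ℓ) : ℓ.length + 1 = p.length := by
  induction h with
  | single x => simp
  | cons x y t _ _ _ _ _ _ ih => simp only [List.length_cons]; omega

lemma Gd.nodup {p : List V} {ℓ : List ℕ} (h : Gd G lb p ℓ) : p.Nodup := by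
  induction h with
  | single x => simp
  | cons x y t _ _ _ _ hx _ ih => exact List.nodup_cons.2 ⟨hx, ih⟩

lemma Gd.chain {p : List V} {ℓ : List ℕ} (h : Gd G lb p ℓ) : p.Chain' G := by
  induction h with
  | single x => exact List.isChain_singleton x
  | cons x y t hg hh _ he _ _ ih =>
    refine List.isChain_cons.2 ⟨?_, ih⟩
    intro z hz
    rw [hh] at hz
    simp only [Option.mem_some_iff] at hz
    subst hz
    exact he

lemma Gd.lt {p : List V} {ℓ : List ℕ} (h : Gd G lb p ℓ) :
    ∀ a, a + 1 < ℓ.length → ℓ.getD a 0 < ℓ.getD (a + 1) 0 := by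
  induction h with
  | single x => simp
  | @cons p ℓ x y t hg hh hmem he hx hlt ih =>
    intro a ha
    cases a with
    | zero =>
      simp only [List.length_cons] at ha
      cases ℓ with
      | nil => simp at ha
      | cons t' ℓ' => simpa using hlt t' rfl
    | succ a =>
      simp only [List.length_cons] at ha
      simpa using ih a (by omega)

lemma Gd.mem {p : List V} {ℓ : List ℕ} (h : Gd G lb p ℓ) :
    ∀ a, a + 1 < p.length → ∃ x y : V, p[a]? = some x ∧ p[a + 1]? = some y ∧
      ℓ.getD a 0 ∈ lb x y := by
  induction h with
  | single x => simp
  | @cons p ℓ x y t hg hh hmem he hx hlt ih =>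
    intro a ha
    cases a with
    | zero =>
      refine ⟨x, y, by simp, ?_, by simpa using hmem⟩
      rw [List.getElem?_cons_succ, ← List.head?_eq_getElem?]
      exact hh
    | succ a =>
      simp only [List.length_cons] at ha
      obtain ⟨x', y', h1, h2, h3⟩ := ih a (by omega)
      exact ⟨x', y', by simpa using h1, by simpa using h2, by simpa using h3⟩

lemma Gd.hasJourney {p : List V} {ℓ : List ℕ} {u v : V} (h : Gd G lb p ℓ)
    (hu : p.head? = some u) (hv : p.getLast? = some v) : HasJourney G lb u v := by
  refine ⟨p, hu, hv, h.nodup G, h.chain G, fun a => ℓ.getD a 0, ?_, ?_⟩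
  · intro a ha
    have := h.length G
    exact h.lt G a (by omega)
  · intro a ha
    exact h.mem G a ha

lemma Gd.consHead {p : List V} {ℓ : List ℕ} {x y : V} {t : ℕ}
    (h : Gd G lb p ℓ) (hh : p.head? = some y) (hmem : t ∈ lb x y) (he : G x y)
    (hx : x ∉ p) (hlt : ∀ t' ∈ ℓ, t < t') : Gd G lb (x :: p) (t :: ℓ) :=
  Gd.cons x y t h hh hmem he hx (fun t' ht' => hlt t' (List.mem_of_mem_head? ht'))

lemma nodup_getLast_not_mem_dropLast {p : List V} {w : V} (hnd : p.Nodup)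
    (hw : p.getLast? = some w) : w ∉ p.dropLast := by
  have hne : p ≠ [] := by rintro rfl; simp at hw
  rw [List.getLast?_eq_getLast hne] at hw
  have hlast : p.getLast hne = w := Option.some.inj hw
  have heq := List.dropLast_append_getLast hne
  rw [hlast] at heq
  intro hmem
  rw [← heq] at hnd
  rcases List.nodup_append.1 hnd with ⟨-, -, hdisj⟩
  exact hdisj w hmem w (by simp) rfl

lemma Gd.trans {p₁ p₂ : List V} {ℓ₁ ℓ₂ : List ℕ} {w : V}
    (h₁ : Gd G lb p₁ ℓ₁) (h₂ : Gd G lb p₂ ℓ₂)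
    (hw₁ : p₁.getLast? = some w) (hw₂ : p₂.head? = some w)
    (hdisj : ∀ x ∈ p₁.dropLast, x ∉ p₂)
    (hlab : ∀ t ∈ ℓ₁, ∀ t' ∈ ℓ₂, t < t') :
    Gd G lb (p₁.dropLast ++ p₂) (ℓ₁ ++ ℓ₂) := by
  induction h₁ with
  | single x =>
    simp only [List.getLast?_singleton, Option.some.injEq] at hw₁
    subst hw₁
    simpa using h₂
  | @cons p ℓ x y t hg hh hmem he hx hlt ih =>
    have hpne : p ≠ [] := hg.ne_nil G
    have hdrop : (x :: p).dropLast = x :: p.dropLast := by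
      cases p with
      | nil => exact absurd rfl hpne
      | cons a q => simp [List.dropLast_cons₂]
    have hlast : p.getLast? = some w := by
      rw [← hw₁]
      cases p with
      | nil => exact absurd rfl hpne
      | cons a q => rw [List.getLast?_cons_cons]
    have ihres := ih hlast (fun z hz => hdisj z (by rw [hdrop]; exact List.mem_cons_of_mem _ hz))
      (fun t' ht' => hlab t' (List.mem_cons_of_mem _ ht'))
    rw [hdrop, List.cons_append]
    refine Gd.cons x y t ihres ?_ hmem he ?_ ?_
    · -- head of (p.dropLast ++ p₂) is y
      cases p with
      | nil => exact absurd rfl hpne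
      | cons a q =>
        simp only [List.head?_cons, Option.some.injEq] at hh
        subst hh
        cases q with
        | nil =>
          simp only [List.dropLast_singleton, List.nil_append]
          rw [hw₂]
          simp only [List.getLast?_singleton, Option.some.injEq] at hlast
          rw [hlast]
        | cons b r =>
          simp [List.dropLast_cons₂]
    · intro hc
      rcases List.mem_append.1 hc with hc | hc
      · exact hx ((List.dropLast_sublist p).subset hc)
      · exact hdisj x (by rw [hdrop]; exact List.mem_cons_self ..) hc
    · intro t' ht'
      have ht'' : t' ∈ ℓ ++ ℓ₂ := List.mem_of_mem_head? ht'
      cases ℓ with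
      | nil =>
        simp only [List.nil_append] at ht''
        exact hlab t (by simp) t' ht''
      | cons s1 ℓ1 =>
        have hts : t' = s1 := by
          simpa [List.cons_append] using ht'.symm
        subst hts
        exact hlt t' rfl


lemma getLast?_cons' {α : Type*} (x : α) {l : List α} (h : l ≠ []) :
    (x :: l).getLast? = l.getLast? := by
  cases l with
  | nil => exact absurd rfl h
  | cons a q => exact List.getLast?_cons_cons ..

lemma nn_pos : 0 < nn (V := V) := Nat.succ_pos _

lemma inSeg : ∀ (k : ℕ) (u : V), k ≤ din G u →
    ∃ p ℓ, Gd G (lab G) p ℓ ∧ p.head? = some u ∧ p.getLast? = some ((pa G)^[k] u) ∧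
      (∀ x ∈ p, ∃ j ≤ k, x = (pa G)^[j] u) ∧
      (∀ t ∈ ℓ, 2 * nn (V := V) * lvl G u + nn (V := V) - din G u ≤ t ∧
        t < 2 * nn (V := V) * lvl G u + nn (V := V) - din G u + k) := by
  intro k
  induction k with
  | zero =>
    intro u _
    exact ⟨[u], [], Gd.single u, rfl, by simp, by
      intro x hx
      simp only [List.mem_singleton] at hx
      exact ⟨0, le_rfl, by simp [hx]⟩, by simp⟩
  | succ k ih =>
    intro u hk
    have hdin : din G u ≠ 0 := by omega
    obtain ⟨he, hrel, hdinpa⟩ := pa_spec G hdin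
    have hlvl : lvl G (pa G u) = lvl G u := lvl_eq_of_rel G hrel
    have hdinlt : din G u < nn (V := V) := by
      have := din_lt_card G u
      rw [nn]; omega
    obtain ⟨p, ℓ, hgd, hhead, hlast, hmemv, hmemt⟩ := ih (pa G u) (by omega)
    refine ⟨u :: p, (2 * nn (V := V) * lvl G u + nn (V := V) - din G u) :: ℓ,
      ?_, rfl, ?_, ?_, ?_⟩
    · refine Gd.consHead G hgd hhead ?_ he ?_ ?_
      · rw [lab, Finset.mem_union, Finset.mem_union]
        left; left
        rw [if_pos ⟨hdin, rfl⟩]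
        simp
      · intro hc
        obtain ⟨j, hj, hx⟩ := hmemv u hc
        have h1 : din G ((pa G)^[j + 1] u) = din G u - (j + 1) :=
          (pa_iter G (j + 1) (by omega)).1
        rw [Function.iterate_succ_apply, ← hx] at h1
        omega
      · intro t' ht'
        have := (hmemt t' ht').1
        rw [hlvl] at this
        omega
    · rw [getLast?_cons' u (hgd.ne_nil G), hlast, Function.iterate_succ_apply]
    · intro x hx
      rcases List.mem_cons.1 hx with rfl | hx
      · exact ⟨0, by omega, by simp⟩
      · obtain ⟨j, hj, hx'⟩ := hmemv x hx
        exact ⟨j + 1, by omega, by rw [hx', Function.iterate_succ_apply]⟩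
    · intro t ht
      rcases List.mem_cons.1 ht with rfl | ht
      · omega
      · have := hmemt t ht
        rw [hlvl] at this
        omega

lemma outSeg : ∀ (k : ℕ) (v : V), k ≤ dout G v →
    ∃ p ℓ, Gd G (lab G) p ℓ ∧ p.head? = some ((qa G)^[k] v) ∧ p.getLast? = some v ∧
      (∀ x ∈ p, ∃ j ≤ k, x = (qa G)^[j] v) ∧
      (∀ t ∈ ℓ, 2 * nn (V := V) * lvl G v + nn (V := V) + dout G v - k < t ∧
        t ≤ 2 * nn (V := V) * lvl G v + nn (V := V) + dout G v) := by
  intro k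
  induction k with
  | zero =>
    intro v _
    exact ⟨[v], [], Gd.single v, by simp, by simp, by
      intro x hx
      simp only [List.mem_singleton] at hx
      exact ⟨0, le_rfl, by simp [hx]⟩, by simp⟩
  | succ k ih =>
    intro v hk
    obtain ⟨p, ℓ, hgd, hhead, hlast, hmemv, hmemt⟩ := ih v (by omega)
    set w := (qa G)^[k] v with hw
    have hdw : dout G w = dout G v - k := (qa_iter G k (by omega)).1
    have hrelw : rel G w v := (qa_iter G k (by omega)).2
    have hlvlw : lvl G w = lvl G v := lvl_eq_of_rel G hrelw
    have hdwne : dout G w ≠ 0 := by omega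
    obtain ⟨he, hrel', hd'⟩ := qa_spec G hdwne
    refine ⟨qa G w :: p, (2 * nn (V := V) * lvl G v + nn (V := V) + dout G v - k) :: ℓ,
      ?_, ?_, ?_, ?_, ?_⟩
    · refine Gd.consHead G hgd hhead ?_ he ?_ ?_
      · rw [lab, Finset.mem_union, Finset.mem_union]
        left; right
        rw [if_pos ⟨hdwne, rfl⟩]
        simp only [Finset.mem_singleton]
        rw [hlvlw, hdw]
        omega
      · intro hc
        obtain ⟨j, hj, hx⟩ := hmemv (qa G w) hc
        have hdj : dout G ((qa G)^[j] v) = dout G v - j := (qa_iter G j (by omega)).1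
        have hdq : dout G (qa G w) = dout G v - (k + 1) := by omega
        rw [← hx] at hdj
        omega
      · intro t' ht'
        have := (hmemt t' ht').1
        omega
    · simp only [List.head?_cons, Option.some.injEq]
      rw [hw]
      exact (Function.iterate_succ_apply' (qa G) k v).symm
    · rw [getLast?_cons' _ (hgd.ne_nil G), hlast]
    · intro x hx
      rcases List.mem_cons.1 hx with rfl | hx
      · exact ⟨k + 1, le_rfl, by
          rw [hw]; exact (Function.iterate_succ_apply' (qa G) k v).symm⟩
      · obtain ⟨j, hj, hx'⟩ := hmemv x hx
        exact ⟨j, by omega, hx'⟩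
    · intro t ht
      rcases List.mem_cons.1 ht with rfl | ht
      · omega
      · have := hmemt t ht
        omega


lemma within {u v : V} (h : rp G u = rp G v) :
    ∃ p ℓ, Gd G (lab G) p ℓ ∧ p.head? = some u ∧ p.getLast? = some v ∧
      (∀ x ∈ p, rel G x u) ∧
      (∀ t ∈ ℓ, 2 * nn (V := V) * lvl G u < t ∧
        t ≤ 2 * nn (V := V) * lvl G u + 2 * nn (V := V) - 2) := by
  have hrel_uv : rel G u v := rel_of_rp_eq G h
  have hlvl_uv : lvl G u = lvl G v := lvl_eq_of_rel G hrel_uv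
  have hcard : 1 ≤ Fintype.card V := Fintype.card_pos_iff.2 ⟨u⟩
  have hnn : nn (V := V) = Fintype.card V + 1 := rfl
  have hdinlt : din G u < nn (V := V) := by have := din_lt_card G u; omega
  have hdoutlt : dout G v < nn (V := V) := by have := dout_lt_card G v; omega
  have hex : ∃ k, k ≤ din G u ∧ ∃ j, j ≤ dout G v ∧ (pa G)^[k] u = (qa G)^[j] v :=
    ⟨din G u, le_rfl, dout G v, le_rfl, by rw [pa_iter_din, qa_iter_dout, h]⟩
  set k₀ := Nat.find hex with hk₀
  obtain ⟨hk₀le, j₀, hj₀le, hjunction⟩ := Nat.find_spec hex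
  obtain ⟨p₁, ℓ₁, hgd₁, hh₁, hl₁, hv₁, ht₁⟩ := inSeg G k₀ u hk₀le
  obtain ⟨p₂, ℓ₂, hgd₂, hh₂, hl₂, hv₂, ht₂⟩ := outSeg G j₀ v hj₀le
  set w := (pa G)^[k₀] u with hwdef
  have hh₂' : p₂.head? = some w := by rw [hh₂, hjunction]
  have hdisj : ∀ x ∈ p₁.dropLast, x ∉ p₂ := by
    intro x hxdrop hxp₂
    have hxp₁ : x ∈ p₁ := (List.dropLast_sublist p₁).subset hxdrop
    obtain ⟨j, hj, hxj⟩ := hv₁ x hxp₁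
    obtain ⟨i, hi, hxi⟩ := hv₂ x hxp₂
    have hmin : k₀ ≤ j := Nat.find_min' hex
      ⟨by omega, i, by omega, by rw [← hxj, ← hxi]⟩
    have hjeq : j = k₀ := by omega
    have hxw : x = w := by rw [hxj, hjeq]
    have := nodup_getLast_not_mem_dropLast (hgd₁.nodup G) hl₁
    exact this (hxw ▸ hxdrop)
  have hlab12 : ∀ t ∈ ℓ₁, ∀ t' ∈ ℓ₂, t < t' := by
    intro t ht t' ht'
    have h1 := ht₁ t ht
    have h2 := ht₂ t' ht'
    rw [hlvl_uv] at h1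
    omega
  have hcomb := Gd.trans G hgd₁ hgd₂ hl₁ hh₂' hdisj hlab12
  refine ⟨p₁.dropLast ++ p₂, ℓ₁ ++ ℓ₂, hcomb, ?_, ?_, ?_, ?_⟩
  · -- head is u
    cases hp₁ : p₁ with
    | nil => rw [hp₁] at hh₁; simp at hh₁
    | cons a q =>
      rw [hp₁] at hh₁
      simp only [List.head?_cons, Option.some.injEq] at hh₁
      subst hh₁
      cases q with
      | nil =>
        simp only [List.dropLast_singleton, List.nil_append]
        rw [hh₂', ← hl₁, hp₁]
        simp
      | cons b r =>
        simp [List.dropLast_cons₂]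
  · rw [List.getLast?_append_of_ne_nil _ (hgd₂.ne_nil G), hl₂]
  · intro x hx
    rcases List.mem_append.1 hx with hx | hx
    · obtain ⟨j, hj, hxj⟩ := hv₁ x ((List.dropLast_sublist p₁).subset hx)
      rw [hxj]
      exact (pa_iter G j (by omega)).2
    · obtain ⟨i, hi, hxi⟩ := hv₂ x hx
      rw [hxi]
      exact rel_trans G ((qa_iter G i (by omega)).2) (rel_symm G hrel_uv)
  · intro t ht
    have hdoutcard : dout G v < Fintype.card V := dout_lt_card G v
    rcases List.mem_append.1 ht with ht | ht
    · have h1 := ht₁ t ht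
      set B := 2 * nn (V := V) * lvl G u with hB
      omega
    · have h1 := ht₂ t ht
      rw [← hlvl_uv] at h1
      set B := 2 * nn (V := V) * lvl G u with hB
      omega


lemma head_dropLast_append {p₁ p₂ : List V} {u w : V} (h₁ : p₁.head? = some u)
    (hl : p₁.getLast? = some w) (h₂ : p₂.head? = some w) :
    (p₁.dropLast ++ p₂).head? = some u := by
  cases hp₁ : p₁ with
  | nil => rw [hp₁] at h₁; simp at h₁
  | cons a q =>
    rw [hp₁] at h₁
    simp only [List.head?_cons, Option.some.injEq] at h₁
    subst h₁
    cases q with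
    | nil =>
      simp only [List.dropLast_singleton, List.nil_append]
      rw [h₂, ← hl, hp₁]
      simp
    | cons b r =>
      simp [List.dropLast_cons₂]

lemma extract {u v : V} (h : Relation.ReflTransGen G u v) :
    ¬ rel G u v → ∃ x y, rel G x u ∧ G x y ∧ ¬ rel G x y ∧
      Relation.ReflTransGen G y v := by
  induction h using Relation.ReflTransGen.head_induction_on with
  | refl => intro hne; exact absurd (rel_refl G v) hne
  | head e hr ih =>
    rename_i a c
    intro hne
    by_cases hac : rel G a c
    · have hncv : ¬ rel G c v := fun hcv => hne (rel_trans G hac hcv)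
      obtain ⟨x, y, hx, hxy, hnxy, hy⟩ := ih hncv
      exact ⟨x, y, rel_trans G hx (rel_symm G hac), hxy, hnxy, hy⟩
    · exact ⟨a, c, rel_refl G a, e, hac, hr⟩

lemma key : ∀ (m : ℕ) (u v : V), Fintype.card V - lvl G u ≤ m →
    Relation.ReflTransGen G u v →
    ∃ p ℓ, Gd G (lab G) p ℓ ∧ p.head? = some u ∧ p.getLast? = some v ∧
      (∀ x ∈ p, lvl G u ≤ lvl G x) ∧ (∀ t ∈ ℓ, 2 * nn (V := V) * lvl G u < t) := by
  intro m
  induction m with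
  | zero =>
    intro u v hm hr
    by_cases hrel : rel G u v
    · obtain ⟨p, ℓ, hgd, hh, hl, hv, ht⟩ := within G (rp_eq_of_rel G hrel)
      exact ⟨p, ℓ, hgd, hh, hl,
        fun x hx => le_of_eq (lvl_eq_of_rel G (rel_symm G (hv x hx))),
        fun t ht' => (ht t ht').1⟩
    · exfalso
      obtain ⟨x, y, hxu, hxy, hnxy, hyv⟩ := extract G hr hrel
      have h1 : lvl G x = lvl G u := lvl_eq_of_rel G hxu
      have h2 : lvl G x < lvl G y := lvl_lt G hxy hnxy
      have h3 : lvl G y ≤ Fintype.card V := lvl_le_card G y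
      omega
  | succ m ih =>
    intro u v hm hr
    by_cases hrel : rel G u v
    · obtain ⟨p, ℓ, hgd, hh, hl, hv, ht⟩ := within G (rp_eq_of_rel G hrel)
      exact ⟨p, ℓ, hgd, hh, hl,
        fun x hx => le_of_eq (lvl_eq_of_rel G (rel_symm G (hv x hx))),
        fun t ht' => (ht t ht').1⟩
    · obtain ⟨x, y, hxu, hxy, hnxy, hyv⟩ := extract G hr hrel
      have h1 : lvl G x = lvl G u := lvl_eq_of_rel G hxu
      have h2 : lvl G x < lvl G y := lvl_lt G hxy hnxy
      have h3 : lvl G y ≤ Fintype.card V := lvl_le_card G y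
      obtain ⟨p₂, ℓ₂, hgd₂, hh₂, hl₂, hv₂, ht₂⟩ := ih y v (by omega) hyv
      -- multiplicative bound
      have hmul : 2 * nn (V := V) * (lvl G u + 1) ≤ 2 * nn (V := V) * lvl G y :=
        Nat.mul_le_mul_left _ (by omega)
      have hexp : 2 * nn (V := V) * (lvl G u + 1)
          = 2 * nn (V := V) * lvl G u + 2 * nn (V := V) := by ring
      have hnn2 : 2 ≤ nn (V := V) := by
        have : 1 ≤ Fintype.card V := Fintype.card_pos_iff.2 ⟨u⟩
        rw [nn]; omega
      set c := 2 * nn (V := V) * lvl G u + 2 * nn (V := V) - 1 with hc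
      -- prepend the cross edge x → y
      have hcons : Gd G (lab G) (x :: p₂) (c :: ℓ₂) := by
        refine Gd.consHead G hgd₂ hh₂ ?_ hxy ?_ ?_
        · rw [lab, Finset.mem_union]
          right
          rw [if_pos ⟨hxy, hnxy⟩]
          simp only [Finset.mem_singleton]
          rw [h1]
        · intro hcmem
          have := hv₂ x hcmem
          omega
        · intro t' ht'
          have := ht₂ t' ht'
          omega
      -- journey within the component from u to x
      obtain ⟨p₁, ℓ₁, hgd₁, hh₁, hl₁, hv₁, ht₁⟩ :=
        within G (rp_eq_of_rel G (rel_symm G hxu))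
      have hh₂' : (x :: p₂).head? = some x := rfl
      have hdisj : ∀ z ∈ p₁.dropLast, z ∉ x :: p₂ := by
        intro z hzdrop hz
        have hzp₁ : z ∈ p₁ := (List.dropLast_sublist p₁).subset hzdrop
        have hzlvl : lvl G z = lvl G u := lvl_eq_of_rel G (hv₁ z hzp₁)
        rcases List.mem_cons.1 hz with rfl | hz
        · exact nodup_getLast_not_mem_dropLast (hgd₁.nodup G) hl₁ hzdrop
        · have := hv₂ z hz
          omega
      have hlab12 : ∀ t ∈ ℓ₁, ∀ t' ∈ c :: ℓ₂, t < t' := by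
        intro t ht t' ht'
        have hb := ht₁ t ht
        rcases List.mem_cons.1 ht' with rfl | ht'
        · omega
        · have := ht₂ t' ht'
          omega
      have hcomb := Gd.trans G hgd₁ hcons hl₁ hh₂' hdisj hlab12
      refine ⟨p₁.dropLast ++ (x :: p₂), ℓ₁ ++ (c :: ℓ₂), hcomb,
        head_dropLast_append hh₁ hl₁ hh₂', ?_, ?_, ?_⟩
      · rw [List.getLast?_append_of_ne_nil _ (by simp),
          getLast?_cons' _ (hgd₂.ne_nil G), hl₂]
      · intro z hz
        rcases List.mem_append.1 hz with hz | hz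
        · exact le_of_eq (lvl_eq_of_rel G
            (hv₁ z ((List.dropLast_sublist p₁).subset hz))).symm
        · rcases List.mem_cons.1 hz with rfl | hz
          · omega
          · have := hv₂ z hz
            omega
      · intro t ht
        rcases List.mem_append.1 ht with ht | ht
        · exact (ht₁ t ht).1
        · rcases List.mem_cons.1 ht with rfl | ht
          · omega
          · have := ht₂ t ht
            omega

lemma master : ∃ lb : V → V → Finset ℕ, (∀ u v, (lb u v).card ≤ 2) ∧
    ∀ u v : V, Relation.ReflTransGen G u v → HasJourney G lb u v := by
  refine ⟨lab G, lab_card G, ?_⟩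
  intro u v h
  obtain ⟨p, ℓ, hgd, hh, hl, -, -⟩ :=
    key G (Fintype.card V) u v (by omega) h
  exact hgd.hasJourney G hh hl

end RTTwo

/-- Temporality w.r.t. preserving reachabilities is at most 2.
First clause: for every strongly connected digraph `G` there is a labeling with at most
2 labels per edge such that every ordered pair of nodes is connected by a journey.
Second clause: consequently, every digraph admits a labeling with at most 2 labels per
edge preserving all reachabilities (a journey from `u` to `v` whenever `v` is reachable
from `u`). -/
theorem reachability_temporality_le_two {V : Type*} [Fintype V] :
    (∀ G : V → V → Prop, (∀ u v : V, Relation.ReflTransGen G u v) →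
      ∃ lab : V → V → Finset ℕ, (∀ u v, (lab u v).card ≤ 2) ∧
        ∀ u v : V, HasJourney G lab u v) ∧
    (∀ G : V → V → Prop,
      ∃ lab : V → V → Finset ℕ, (∀ u v, (lab u v).card ≤ 2) ∧
        ∀ u v : V, Relation.ReflTransGen G u v → HasJourney G lab u v) := by
  constructor
  · intro G hsc
    obtain ⟨lb, hcard, hj⟩ := RTTwo.master G
    exact ⟨lb, hcard, fun u v => hj u v (hsc u v)⟩
  · intro G
    exact RTTwo.master G
end

section
/- If G is a directed ring on n nodes and the labeling is restricted to have maximum label at most (n-1)+k, then the temporality w.r.t. preserving all paths is Θ(n/k) for 1 ≤ k ≤ n-1, and equals n-1 when k=0. -/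
/-- The set of achievable bounds on the number of labels per edge, over all labelings of
the directed ring on `n` nodes that preserve all paths and use only labels in
`{1, …, (n-1)+k}` (age restriction). -/
def RingTemporalities (n k : ℕ) : Set ℕ :=
  {m | ∃ lab : ℕ → Finset ℕ, PreservesRingPaths n lab ∧
        (∀ i < n, ∀ t ∈ lab i, 1 ≤ t ∧ t ≤ (n - 1) + k) ∧
        ∀ i < n, (lab i).card ≤ m}

lemma ring_mono (ts : ℕ → ℕ) (m : ℕ) (h : ∀ j, j + 1 < m → ts j < ts (j + 1)) :
    ∀ p q, p ≤ q → q < m → ts p + (q - p) ≤ ts q := by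
  intro p q hpq hq
  induction q with
  | zero => simp [Nat.le_zero.mp hpq]
  | succ q ih =>
    rcases Nat.eq_or_lt_of_le hpq with h1 | h1
    · simp [h1]
    · have hp : p ≤ q := Nat.lt_succ_iff.mp h1
      have h2 := ih hp (Nat.lt_of_succ_lt hq)
      have h3 := h q hq
      omega

lemma ring_window {n k : ℕ} (hn : 3 ≤ n) {lab : ℕ → Finset ℕ}
    (hp : PreservesRingPaths n lab)
    (hb : ∀ i < n, ∀ t ∈ lab i, 1 ≤ t ∧ t ≤ (n - 1) + k) :
    ∀ i < n, ∀ j, j ≤ n - 2 → ∃ t ∈ lab i, j + 1 ≤ t ∧ t ≤ j + 1 + k := by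
  intro i hi j hj
  set a := (i + n - j) % n with ha_def
  have ha : a < n := Nat.mod_lt _ (by omega)
  obtain ⟨ts, hts1, hts2⟩ := hp a (n - 1) ha (by omega) le_rfl
  have hedge : (a + j) % n = i := by
    have : (a + j) % n = ((i + n - j) + j) % n := by
      rw [ha_def, Nat.mod_add_mod]
    rw [this]
    have h1 : i + n - j + j = i + n := by omega
    rw [h1, Nat.add_mod_right, Nat.mod_eq_of_lt hi]
  have hjm : j < n - 1 := by omega
  have hmem := hts2 j hjm
  rw [hedge] at hmem
  -- lower bound
  have h0 := hts2 0 (by omega)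
  have hts0 : 1 ≤ ts 0 := (hb ((a + 0) % n) (Nat.mod_lt _ (by omega)) _ h0).1
  have hlow := ring_mono ts (n - 1) hts1 0 j (Nat.zero_le _) hjm
  -- upper bound
  have hend := hts2 (n - 2) (by omega)
  have htsend : ts (n - 2) ≤ (n - 1) + k :=
    (hb ((a + (n - 2)) % n) (Nat.mod_lt _ (by omega)) _ hend).2
  have hhigh := ring_mono ts (n - 1) hts1 j (n - 2) (by omega) (by omega)
  exact ⟨ts j, hmem, by omega, by omega⟩

lemma ring_lower {n k m : ℕ} (hn : 3 ≤ n) (hm : m ∈ RingTemporalities n k) :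
    n - 1 ≤ (k + 1) * m := by
  obtain ⟨lab, hp, hb, hc⟩ := hm
  have hw := ring_window hn hp hb 0 (by omega)
  have hw' : ∀ j : ℕ, ∃ t : ℕ, j ≤ n - 2 → t ∈ lab 0 ∧ j + 1 ≤ t ∧ t ≤ j + 1 + k := by
    intro j
    by_cases h : j ≤ n - 2
    · obtain ⟨t, ht1, ht2, ht3⟩ := hw j h
      exact ⟨t, fun _ => ⟨ht1, ht2, ht3⟩⟩
    · exact ⟨0, fun hj => absurd hj h⟩
  choose f hf using hw'
  have hmaps : ∀ j ∈ Finset.range (n - 1), f j ∈ lab 0 := by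
    intro j hj
    exact (hf j (by simp at hj; omega)).1
  have hfib : ∀ b ∈ lab 0, ((Finset.range (n - 1)).filter (fun j => f j = b)).card ≤ k + 1 := by
    intro b _
    have hsub : (Finset.range (n - 1)).filter (fun j => f j = b) ⊆ Finset.Icc (b - 1 - k) (b - 1) := by
      intro j hj
      simp only [Finset.mem_filter, Finset.mem_range] at hj
      obtain ⟨hj1, hj2⟩ := hj
      have := hf j (by omega)
      rw [hj2] at this
      simp only [Finset.mem_Icc]
      omega
    calc ((Finset.range (n - 1)).filter (fun j => f j = b)).card
        ≤ (Finset.Icc (b - 1 - k) (b - 1)).card := Finset.card_le_card hsub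
      _ = b - 1 + 1 - (b - 1 - k) := Nat.card_Icc _ _
      _ ≤ k + 1 := by omega
  have := Finset.card_le_mul_card_image_of_maps_to hmaps (k + 1) hfib
  rw [Finset.card_range] at this
  calc n - 1 ≤ (k + 1) * (lab 0).card := this
    _ ≤ (k + 1) * m := Nat.mul_le_mul_left _ (hc 0 (by omega))

lemma ring_mem_base {n : ℕ} (k : ℕ) (hn : 3 ≤ n) : (n - 1) ∈ RingTemporalities n k := by
  refine ⟨fun _ => Finset.Icc 1 (n - 1), ?_, ?_, ?_⟩
  · intro a m ha hm1 hm2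
    refine ⟨fun j => j + 1, fun j _ => by show j + 1 < (j + 1) + 1; omega, fun j hj => ?_⟩
    show j + 1 ∈ Finset.Icc 1 (n - 1)
    simp only [Finset.mem_Icc]
    omega
  · intro i _ t ht
    simp only [Finset.mem_Icc] at ht
    omega
  · intro i _
    rw [Nat.card_Icc]
    omega

lemma ring_mem_good {n k : ℕ} (hn : 3 ≤ n) (hk : 1 ≤ k) (hkn : k ≤ n - 1) :
    2 * ((n - 1) / k + 1) ∈ RingTemporalities n k := by
  set R := (n - 1) / k + 1 with hR
  refine ⟨fun i => ((Finset.range R).filter (fun r => r * k ≤ i)).image (fun r => i + 1 - r * k)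
      ∪ ((Finset.range R).filter (fun r => i + n + 1 - r * k ≤ n - 1 + k)).image
        (fun r => i + n + 1 - r * k), ?_, ?_, ?_⟩
  · intro a m ha hm1 hm2
    refine ⟨fun j => j + a % k + 1,
      fun j _ => by show j + a % k + 1 < (j + 1) + a % k + 1; omega,
      fun j hj => ?_⟩
    show j + a % k + 1 ∈ _
    have h1 : a % k + a / k * k = a := Nat.mod_add_div' a k
    have h2 : a % k < k := Nat.mod_lt _ (by omega)
    have h3 : a / k ≤ (n - 1) / k := Nat.div_le_div_right (by omega)
    by_cases hcase : a + j < n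
    · have hi : (a + j) % n = a + j := Nat.mod_eq_of_lt hcase
      rw [hi]
      apply Finset.mem_union_left
      rw [Finset.mem_image]
      refine ⟨a / k, ?_, ?_⟩
      · rw [Finset.mem_filter, Finset.mem_range]
        constructor
        · show a / k < R; omega
        · show a / k * k ≤ a + j; omega
      · show a + j + 1 - a / k * k = j + a % k + 1; omega
    · have hlt : a + j < 2 * n := by omega
      have hi : (a + j) % n = a + j - n := by
        rw [Nat.mod_eq_sub_mod (by omega), Nat.mod_eq_of_lt (by omega)]
      rw [hi]
      apply Finset.mem_union_right
      rw [Finset.mem_image]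
      refine ⟨a / k, ?_, ?_⟩
      · rw [Finset.mem_filter, Finset.mem_range]
        constructor
        · show a / k < R; omega
        · show a + j - n + n + 1 - a / k * k ≤ n - 1 + k; omega
      · show a + j - n + n + 1 - a / k * k = j + a % k + 1; omega
  · intro i hi t ht
    rw [Finset.mem_union] at ht
    rcases ht with ht | ht
    · rw [Finset.mem_image] at ht
      obtain ⟨r, hr, hrt⟩ := ht
      rw [Finset.mem_filter, Finset.mem_range] at hr
      obtain ⟨hr1, hr2⟩ := hr
      constructor
      · omega
      · omega
    · rw [Finset.mem_image] at ht
      obtain ⟨r, hr, hrt⟩ := ht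
      rw [Finset.mem_filter, Finset.mem_range] at hr
      obtain ⟨hr1, hr2⟩ := hr
      have h4 : r * k ≤ ((n - 1) / k) * k := Nat.mul_le_mul_right k (by omega)
      have h5 : ((n - 1) / k) * k ≤ n - 1 := Nat.div_mul_le_self _ _
      constructor
      · omega
      · omega
  · intro i _
    calc _ ≤ (((Finset.range R).filter (fun r => r * k ≤ i)).image (fun r => i + 1 - r * k)).card
          + (((Finset.range R).filter (fun r => i + n + 1 - r * k ≤ n - 1 + k)).image
            (fun r => i + n + 1 - r * k)).card := Finset.card_union_le _ _
      _ ≤ R + R := by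
          apply Nat.add_le_add <;>
          · apply le_trans (Finset.card_image_le)
            apply le_trans (Finset.card_filter_le _ _)
            simp
      _ = 2 * ((n - 1) / k + 1) := by omega

/-- Temporality/age trade-off on the directed ring: with maximum label `(n-1)+k`, the
temporality w.r.t. preserving all paths is `Θ(n/k)` for `1 ≤ k ≤ n-1` (with universal
constants), and equals `n-1` when `k = 0`. -/
theorem ring_temporality_age_tradeoff :
    ∃ c₁ c₂ : ℝ, 0 < c₁ ∧ 0 < c₂ ∧
      ∀ n k : ℕ, 3 ≤ n →
        ((1 ≤ k ∧ k ≤ n - 1) →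
          ∃ m : ℕ, IsLeast (RingTemporalities n k) m ∧
            c₁ * ((n : ℝ) / k) ≤ m ∧ (m : ℝ) ≤ c₂ * ((n : ℝ) / k)) ∧
        (k = 0 → IsLeast (RingTemporalities n 0) (n - 1)) := by
  refine ⟨1/4, 4, by norm_num, by norm_num, fun n k hn => ⟨?_, ?_⟩⟩
  · rintro ⟨hk1, hk2⟩
    have hmem := ring_mem_good hn hk1 hk2
    have hne : (RingTemporalities n k).Nonempty := ⟨_, hmem⟩
    set m := sInf (RingTemporalities n k) with hm_def
    have hmS : m ∈ RingTemporalities n k := Nat.sInf_mem hne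
    refine ⟨m, ⟨hmS, fun b hb => Nat.sInf_le hb⟩, ?_, ?_⟩
    · have h1 : n - 1 ≤ (k + 1) * m := ring_lower hn hmS
      have hk0 : (0:ℝ) < k := by exact_mod_cast hk1
      have h1' : (n:ℝ) - 1 ≤ (k + 1) * m := by
        have := h1
        have hcast : ((n - 1 : ℕ) : ℝ) = (n:ℝ) - 1 := by
          push_cast [Nat.cast_sub (by omega : 1 ≤ n)]; ring
        calc (n:ℝ) - 1 = ((n - 1 : ℕ) : ℝ) := hcast.symm
          _ ≤ (((k + 1) * m : ℕ) : ℝ) := by exact_mod_cast this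
          _ = ((k:ℝ) + 1) * m := by push_cast; ring
      have hkr : (1:ℝ) ≤ k := by exact_mod_cast hk1
      have hnr : (3:ℝ) ≤ n := by exact_mod_cast hn
      have hmn : (0:ℝ) ≤ m := Nat.cast_nonneg m
      have h2 : (n:ℝ) / k ≤ 4 * m := by
        rw [div_le_iff₀ hk0]
        nlinarith
      linarith
    · have h3 : m ≤ 2 * ((n - 1) / k + 1) := Nat.sInf_le hmem
      have hk0 : (0:ℝ) < k := by exact_mod_cast hk1
      have h4 : (((n - 1) / k : ℕ) : ℝ) ≤ ((n - 1 : ℕ) : ℝ) / k := Nat.cast_div_le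
      have h5 : ((n - 1 : ℕ) : ℝ) ≤ (n : ℝ) := by exact_mod_cast Nat.sub_le n 1
      have h6 : ((n - 1 : ℕ) : ℝ) / k ≤ (n : ℝ) / k := by gcongr
      have h7 : (m:ℝ) ≤ 2 * ((((n - 1) / k : ℕ) : ℝ) + 1) := by exact_mod_cast h3
      have h8 : (1:ℝ) ≤ (n : ℝ) / k := by
        rw [le_div_iff₀ hk0]
        have : (k:ℝ) ≤ (n:ℝ) := by exact_mod_cast (by omega : k ≤ n)
        linarith
      linarith
  · intro hk0
    subst hk0
    refine ⟨ring_mem_base 0 hn, fun b hb => ?_⟩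
    have := ring_lower hn hb
    omega
end
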